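/- Assume E is symmetric ((v,w) ∈ E iff (w,v) ∈ E), the underlying undirected graph on V determined by E is connected, and there is a real number β > 0 such that every directed cycle with at least one edge that repeats no vertex other than its endpoint has total weight at least β times its number of edges. Fix f₀ ∈ V and let τ₁, τ₂ : V → ℝ be admissible with τ₁(f₀) = τ₂(f₀) = 0. Then there is a finite sequence τ₁ = σ₀, σ₁, …, σ_N = τ₂ of admissible functions in which each σ_{j+1} agrees with σ_j at every vertex except exactly one, and whose length satisfies N ≤ (Σ_{v ∈ V} |τ₁(v) − τ₂(v)|)/β + |V|. -/

import Mathlib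

/-- A directed walk from `a` to `b` along edge relation `E`, recorded as the list of its
vertices. -/
def IsWalk {V : Type*} (E : V → V → Prop) (a b : V) (l : List V) : Prop :=
  l.head? = some a ∧ l.getLast? = some b ∧ l.Chain' E

/-- The total weight of a walk. -/
def walkWeight {V : Type*} (δ : V → V → ℝ) (l : List V) : ℝ :=
  ((l.zip l.tail).map fun p => δ p.1 p.2).sum

/-!
Lower `τ₁` to `τ₁ ⊓ τ₂` one vertex at a time, do the same for `τ₂`, and join the first chain
to the reverse of the second. A vertex `v` with `t v < σ v` is lowered to `max (t v) (σ v - β)`.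
Some such vertex can be lowered without breaking admissibility: otherwise every vertex above
`t` has an out-neighbour `w`, again above `t`, with `δ v w < σ w - σ v + β`, and following
these edges around a simple cycle telescopes to a weight below `β` times its length. Each move
lowers `(∑ v, (σ v - t v)⁺) / β + #{v | t v < σ v}` by at least one.
-/

open Finset Function

section Cycles

variable {V : Type*} {E : V → V → Prop} {δ : V → V → ℝ} {β : ℝ}

def SimpleCycleWeightBound (E : V → V → Prop) (δ : V → V → ℝ) (β : ℝ) : Prop :=
  ∀ (a : V) (l : List V), IsWalk E a a l → 2 ≤ l.length → l.dropLast.Nodup →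
    β * ((l.length : ℝ) - 1) ≤ walkWeight δ l

theorem walkWeight_cons_cons (δ : V → V → ℝ) (a b : V) (l : List V) :
    walkWeight δ (a :: b :: l) = δ a b + walkWeight δ (b :: l) := rfl

theorem walkWeight_map_range (δ : V → V → ℝ) (n : ℕ) (ψ : ℕ → V) :
    walkWeight δ ((List.range (n + 1)).map ψ) = ∑ i ∈ range n, δ (ψ i) (ψ (i + 1)) := by
  induction n generalizing ψ with
  | zero => rfl
  | succ n ih =>
    have shift : ∀ k (φ : ℕ → V),
        (List.range (k + 1)).map φ = φ 0 :: (List.range k).map (fun i => φ (i + 1)) := by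
      intro k φ
      rw [List.range_succ_eq_map, List.map_cons, List.map_map]; rfl
    rw [shift, shift n, walkWeight_cons_cons, ← shift n (fun i => ψ (i + 1)), ih,
      sum_range_succ' (fun i => δ (ψ i) (ψ (i + 1))), add_comm]

theorem Function.exists_mem_periodicPts {α : Type*} [Finite α] [Nonempty α] (f : α → α) :
    ∃ x, x ∈ periodicPts f := by
  obtain ⟨a, b, hab, heq⟩ :=
    Finite.exists_ne_map_eq_of_infinite (fun n : ℕ => f^[n] (Classical.arbitrary α))
  wlog hlt : a < b generalizing a b
  · exact this b a hab.symm heq.symm (by omega)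
  refine ⟨f^[a] (Classical.arbitrary α), mk_mem_periodicPts (Nat.sub_pos_of_lt hlt) ?_⟩
  rw [IsPeriodicPt, IsFixedPt, ← iterate_add_apply, Nat.sub_add_cancel hlt.le]
  exact heq.symm

theorem SimpleCycleWeightBound.mul_minimalPeriod_le (hcyc : SimpleCycleWeightBound E δ β)
    {α : Type*} {ι : α → V} (hι : Injective ι) {φ : α → α} (hφ : ∀ x, E (ι x) (ι (φ x)))
    {x : α} (hx : x ∈ periodicPts φ) :
    β * minimalPeriod φ x ≤
      ∑ i ∈ range (minimalPeriod φ x), δ (ι (φ^[i] x)) (ι (φ^[i + 1] x)) := by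
  set m := minimalPeriod φ x
  have hm : 0 < m := minimalPeriod_pos_of_mem_periodicPts hx
  have hclosed : φ^[m] x = x := isPeriodicPt_minimalPeriod φ x
  have hwalk : IsWalk E (ι x) (ι x) ((List.range (m + 1)).map fun i => ι (φ^[i] x)) := by
    refine ⟨?_, ?_, ?_⟩
    · rw [List.range_succ_eq_map]; rfl
    · rw [List.range_succ, List.map_append, List.map_singleton, List.getLast?_concat,
        hclosed]
    · show List.IsChain _ _
      rw [List.isChain_map, List.isChain_range_succ]
      intro i _
      simpa only [iterate_succ_apply'] using hφ (φ^[i] x)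
  have hsimple : ((List.range (m + 1)).map fun i => ι (φ^[i] x)).dropLast.Nodup := by
    rw [List.range_succ, List.map_append, List.map_singleton, List.dropLast_concat]
    refine List.Nodup.map_on (fun i hi j hj hij => ?_) List.nodup_range
    exact iterate_injOn_Iio_minimalPeriod (List.mem_range.mp hi) (List.mem_range.mp hj)
      (hι hij)
  have := hcyc (ι x) _ hwalk (by simp only [List.length_map, List.length_range]; omega) hsimple
  simpa [walkWeight_map_range] using this

end Cycles

section Lowering

variable {V : Type*} {E : V → V → Prop} {δ : V → V → ℝ} {β : ℝ}

def Admissible (E : V → V → Prop) (δ : V → V → ℝ) (τ : V → ℝ) : Prop :=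
  ∀ v w, E v w → τ w - τ v ≤ δ v w

theorem Admissible.inf {σ τ : V → ℝ} (hσ : Admissible E δ σ) (hτ : Admissible E δ τ) :
    Admissible E δ (σ ⊓ τ) := by
  intro v w hvw
  rcases min_choice (σ v) (τ v) with h | h <;>
    simp only [Pi.inf_apply, h] <;> linarith [hσ v w hvw, hτ v w hvw,
      min_le_left (σ w) (τ w), min_le_right (σ w) (τ w)]

theorem Admissible.update [DecidableEq V] {σ : V → ℝ} (hσ : Admissible E δ σ) {v : V} {c : ℝ}
    (hc : c ≤ σ v) (hout : ∀ w, E v w → σ w - δ v w ≤ c) : Admissible E δ (update σ v c) := by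
  intro a b hab
  by_cases ha : a = v <;> by_cases hb : b = v
  · subst ha hb; simpa using hσ _ _ hab
  · subst ha; simp only [update_self, update_of_ne hb]; linarith [hout b hab]
  · subst hb; simp only [update_self, update_of_ne ha]; linarith [hσ a b hab]
  · simpa only [update_of_ne ha, update_of_ne hb] using hσ a b hab

theorem SimpleCycleWeightBound.exists_lowerable_vertex [Finite V]
    (hcyc : SimpleCycleWeightBound E δ β) {t σ : V → ℝ} (ht : Admissible E δ t)
    (hne : ∃ v, t v < σ v) :
    ∃ v, t v < σ v ∧ ∀ w, E v w → σ w - δ v w ≤ max (t v) (σ v - β) := by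
  by_contra! hcon
  have hnext : ∀ x : {v // t v < σ v}, ∃ y : {v // t v < σ v},
      E x y ∧ δ x y < σ y - σ x + β := by
    rintro ⟨x, hx⟩
    obtain ⟨w, hxw, hw⟩ := hcon x hx
    rw [max_lt_iff] at hw
    exact ⟨⟨w, by linarith [ht x w hxw]⟩, hxw, by linarith⟩
  choose φ hφE hφδ using hnext
  have : Nonempty {v // t v < σ v} := let ⟨v, hv⟩ := hne; ⟨⟨v, hv⟩⟩
  obtain ⟨x, hx⟩ := exists_mem_periodicPts φ
  have hle := hcyc.mul_minimalPeriod_le Subtype.val_injective hφE hx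
  set m := minimalPeriod φ x
  have hlt : ∑ i ∈ range m, δ (φ^[i] x) (φ^[i + 1] x)
      < ∑ i ∈ range m, (σ (φ^[i + 1] x) - σ (φ^[i] x) + β) := by
    refine sum_lt_sum_of_nonempty (nonempty_range_iff.mpr
      (minimalPeriod_pos_of_mem_periodicPts hx).ne') fun i _ => ?_
    simpa only [iterate_succ_apply'] using hφδ (φ^[i] x)
  have htelescope : ∑ i ∈ range m, (σ (φ^[i + 1] x) - σ (φ^[i] x) + β) = m * β := by
    rw [sum_add_distrib, sum_range_sub (fun i => σ (φ^[i] x)),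
      isPeriodicPt_minimalPeriod φ x]
    simp
  linarith

end Lowering

section Potential

variable {V : Type*} [Fintype V] {β : ℝ}

noncomputable def descentPotential (β : ℝ) (t σ : V → ℝ) : ℝ :=
  (∑ v, max (σ v - t v) 0) / β + #{v | t v < σ v}

theorem descentPotential_nonneg (hβ : 0 ≤ β) (t σ : V → ℝ) : 0 ≤ descentPotential β t σ :=
  add_nonneg (div_nonneg (sum_nonneg fun _ _ => le_max_right _ _) hβ) (Nat.cast_nonneg _)

theorem sum_max_sub_update [DecidableEq V] {t σ : V → ℝ} {v : V} {c : ℝ}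
    (htc : t v ≤ c) (hcσ : c ≤ σ v) :
    ∑ w, max (update σ v c w - t w) 0 = ∑ w, max (σ w - t w) 0 - (σ v - c) := by
  rw [Fintype.sum_eq_add_sum_compl v,
    Fintype.sum_eq_add_sum_compl v (fun w => max (σ w - t w) 0),
    sum_congr rfl fun w hw => by rw [update_of_ne (mem_compl.mp hw ∘ mem_singleton.mpr)],
    update_self, max_eq_left (by linarith), max_eq_left (by linarith)]
  ring

theorem descentPotential_update_add_one_le [DecidableEq V] (hβ : 0 < β) {t σ : V → ℝ} {v : V}
    (hv : t v < σ v) :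
    descentPotential β t (update σ v (max (t v) (σ v - β))) + 1 ≤ descentPotential β t σ := by
  generalize hcdef : max (t v) (σ v - β) = c
  have hcσ : c ≤ σ v := hcdef ▸ max_le hv.le (by linarith)
  have hsupp :
      ({w | t w < update σ v c w} : Finset V) ⊆ ({w | t w < σ w} : Finset V) := by
    intro w
    simp only [mem_filter_univ]
    rcases eq_or_ne w v with rfl | hw
    · exact fun _ => hv
    · rw [update_of_ne hw]; exact id
  unfold descentPotential
  rw [sum_max_sub_update (hcdef ▸ le_max_left _ _) hcσ, sub_div]
  rcases le_or_gt (t v) (σ v - β) with hβv | hβv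
  · have hdrop : (σ v - c) / β = 1 := by
      rw [← hcdef, max_eq_right hβv, sub_sub_cancel, div_self hβ.ne']
    have : (#{w | t w < update σ v c w} : ℝ) ≤ #{w | t w < σ w} := by
      exact_mod_cast card_le_card hsupp
    linarith
  · have hc : c = t v := hcdef ▸ max_eq_left hβv.le
    have hvout : v ∉ ({w | t w < update σ v c w} : Finset V) := by simp [hc]
    have hcard : (#{w | t w < update σ v c w} : ℝ) + 1 ≤ #{w | t w < σ w} := by
      exact_mod_cast card_lt_card
        ((ssubset_iff_of_subset hsupp).mpr ⟨v, by simpa using hv, hvout⟩)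
    have : 0 ≤ (σ v - c) / β := div_nonneg (by linarith) hβ.le
    linarith

theorem descentPotential_add_descentPotential_inf_le (τ₁ τ₂ : V → ℝ) :
    descentPotential β τ₂ τ₁ + descentPotential β (τ₁ ⊓ τ₂) τ₂
      ≤ (∑ v, |τ₁ v - τ₂ v|) / β + Fintype.card V := by
  classical
  have hsum : ∑ v, max (τ₁ v - τ₂ v) 0 + ∑ v, max (τ₂ v - (τ₁ ⊓ τ₂) v) 0
      = ∑ v, |τ₁ v - τ₂ v| := by
    rw [← sum_add_distrib]
    refine sum_congr rfl fun v _ => ?_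
    rcases le_total (τ₁ v) (τ₂ v) with h | h
    · simp [h, abs_of_nonpos (sub_nonpos.mpr h)]
    · simp [h, abs_of_nonneg (sub_nonneg.mpr h)]
  have hdisj :
      Disjoint ({v | τ₂ v < τ₁ v} : Finset V) ({v | (τ₁ ⊓ τ₂) v < τ₂ v} : Finset V) :=
    disjoint_filter.mpr fun v _ (h : τ₂ v < τ₁ v) => by simp [h.le]
  have hcard :
      (#{v | τ₂ v < τ₁ v} : ℝ) + #{v | (τ₁ ⊓ τ₂) v < τ₂ v} ≤ Fintype.card V := by
    exact_mod_cast (card_union_of_disjoint hdisj).symm.trans_le (card_le_univ _)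
  unfold descentPotential
  rw [← hsum, add_div]
  linarith

end Potential

section Moves

variable {V : Type*} {E : V → V → Prop} {δ : V → V → ℝ}

def SingleSiteMove {α : Type*} (f g : V → α) : Prop :=
  ∃ v, g v ≠ f v ∧ ∀ w, w ≠ v → g w = f w

theorem SingleSiteMove.symm {α : Type*} {f g : V → α} (h : SingleSiteMove f g) :
    SingleSiteMove g f :=
  let ⟨v, hv, hw⟩ := h
  ⟨v, hv.symm, fun w hwv => (hw w hwv).symm⟩

inductive JoinedByMoves (E : V → V → Prop) (δ : V → V → ℝ) : ℕ → (V → ℝ) → (V → ℝ) → Prop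
  | refl {a} : Admissible E δ a → JoinedByMoves E δ 0 a a
  | cons {N a b c} : Admissible E δ a → SingleSiteMove a b → JoinedByMoves E δ N b c →
      JoinedByMoves E δ (N + 1) a c

namespace JoinedByMoves

theorem admissible_left {N : ℕ} {a b : V → ℝ} : JoinedByMoves E δ N a b → Admissible E δ a
  | refl ha | cons ha _ _ => ha

theorem single {a b : V → ℝ} (ha : Admissible E δ a) (hb : Admissible E δ b)
    (hab : SingleSiteMove a b) : JoinedByMoves E δ 1 a b :=
  cons ha hab (refl hb)

theorem trans {N M : ℕ} {a b c : V → ℝ} (hab : JoinedByMoves E δ N a b)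
    (hbc : JoinedByMoves E δ M b c) : JoinedByMoves E δ (N + M) a c := by
  induction hab with
  | refl _ => rwa [zero_add]
  | @cons N _ _ _ ha hmove _ ih => rw [add_right_comm]; exact cons ha hmove (ih hbc)

theorem symm {N : ℕ} {a b : V → ℝ} (h : JoinedByMoves E δ N a b) :
    JoinedByMoves E δ N b a := by
  induction h with
  | refl ha => exact refl ha
  | cons ha hmove hrest ih => exact ih.trans (single hrest.admissible_left ha hmove.symm)

theorem exists_seq {N : ℕ} {a b : V → ℝ} (h : JoinedByMoves E δ N a b) :
    ∃ σ : ℕ → V → ℝ, σ 0 = a ∧ σ N = b ∧ (∀ j ≤ N, Admissible E δ (σ j)) ∧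
      ∀ j < N, SingleSiteMove (σ j) (σ (j + 1)) := by
  induction h with
  | refl ha => exact ⟨fun _ => _, rfl, rfl, fun _ _ => ha, fun _ h => (Nat.not_lt_zero _ h).elim⟩
  | @cons N a b c ha hmove _ ih =>
    obtain ⟨σ, h0, hN, hadm, hmoves⟩ := ih
    refine ⟨fun | 0 => a | j + 1 => σ j, rfl, hN, ?_, ?_⟩
    · rintro (_ | j) hj
      exacts [ha, hadm j (by omega)]
    · rintro (_ | j) hj
      exacts [show SingleSiteMove a (σ 0) from h0 ▸ hmove, hmoves j (by omega)]

end JoinedByMoves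

end Moves

section Descent

variable {V : Type*} [Fintype V] {E : V → V → Prop} {δ : V → V → ℝ} {β : ℝ}

theorem exists_lowering_move (hβ : 0 < β) (hcyc : SimpleCycleWeightBound E δ β) {t σ : V → ℝ}
    (ht : Admissible E δ t) (hσ : Admissible E δ σ) (hne : ∃ v, t v < σ v) :
    ∃ σ', Admissible E δ σ' ∧ SingleSiteMove σ σ' ∧
      descentPotential β t σ' + 1 ≤ descentPotential β t σ ∧ σ' ⊓ t = σ ⊓ t := by
  classical
  obtain ⟨v, hv, hout⟩ := hcyc.exists_lowerable_vertex ht hne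
  have hcσ : max (t v) (σ v - β) < σ v := max_lt hv (by linarith)
  refine ⟨update σ v (max (t v) (σ v - β)), hσ.update hcσ.le hout,
    ⟨v, by simpa using hcσ.ne, fun w hw => update_of_ne hw _ _⟩,
    descentPotential_update_add_one_le hβ hv, ?_⟩
  ext w
  rcases eq_or_ne w v with rfl | hw
  · simp [min_eq_right hv.le]
  · simp [update_of_ne hw]

theorem exists_joinedByMoves_inf (hβ : 0 < β) (hcyc : SimpleCycleWeightBound E δ β)
    {t σ : V → ℝ} (ht : Admissible E δ t) (hσ : Admissible E δ σ) :
    ∃ N : ℕ, (N : ℝ) ≤ descentPotential β t σ ∧ JoinedByMoves E δ N σ (σ ⊓ t) := by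
  obtain ⟨k, hk⟩ := exists_nat_gt (descentPotential β t σ)
  induction k generalizing σ with
  | zero => exact absurd hk (mod_cast (descentPotential_nonneg hβ.le t σ).not_gt)
  | succ k ih =>
    by_cases hne : ∃ v, t v < σ v
    · obtain ⟨σ', hσ', hmove, hdrop, hinf⟩ := exists_lowering_move hβ hcyc ht hσ hne
      obtain ⟨N, hN, hjoin⟩ := ih hσ' (by push_cast at hk; linarith)
      refine ⟨1 + N, by push_cast; linarith, ?_⟩
      rw [← hinf]
      exact (JoinedByMoves.single hσ hσ' hmove).trans hjoin
    · push Not at hne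
      refine ⟨0, by exact_mod_cast descentPotential_nonneg hβ.le t σ, ?_⟩
      rw [inf_eq_left.mpr hne]
      exact .refl hσ

end Descent

theorem admissible_connected_by_single_site_moves_general
    {V : Type*} [Fintype V] (E : V → V → Prop) (δ : V → V → ℝ)
    (β : ℝ) (hβ : 0 < β)
    (hcyc : ∀ (a : V) (l : List V), IsWalk E a a l → 2 ≤ l.length → l.dropLast.Nodup →
      β * ((l.length : ℝ) - 1) ≤ walkWeight δ l)
    (f₀ : V) (τ₁ τ₂ : V → ℝ)
    (h₁ : (∀ v w, E v w → τ₁ w - τ₁ v ≤ δ v w) ∧ τ₁ f₀ = 0)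
    (h₂ : (∀ v w, E v w → τ₂ w - τ₂ v ≤ δ v w) ∧ τ₂ f₀ = 0) :
    ∃ (N : ℕ) (σ : ℕ → V → ℝ),
      (N : ℝ) ≤ (∑ v : V, |τ₁ v - τ₂ v|) / β + Fintype.card V ∧
      σ 0 = τ₁ ∧ σ N = τ₂ ∧
      (∀ j ≤ N, ∀ v w, E v w → σ j w - σ j v ≤ δ v w) ∧
      (∀ j < N, ∃ v, σ (j + 1) v ≠ σ j v ∧ ∀ w, w ≠ v → σ (j + 1) w = σ j w) := by
  obtain ⟨N₁, hN₁, hdown₁⟩ := exists_joinedByMoves_inf hβ hcyc h₂.1 h₁.1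
  obtain ⟨N₂, hN₂, hdown₂⟩ :=
    exists_joinedByMoves_inf hβ hcyc (Admissible.inf h₁.1 h₂.1) h₂.1
  rw [inf_eq_right.mpr inf_le_right] at hdown₂
  obtain ⟨σ, h0, hN, hadm, hmoves⟩ := (hdown₁.trans hdown₂.symm).exists_seq
  refine ⟨N₁ + N₂, σ, ?_, h0, hN, hadm, hmoves⟩
  push_cast
  linarith [descentPotential_add_descentPotential_inf_le (β := β) τ₁ τ₂]

/-- Assume `E` is symmetric, the underlying undirected graph is connected, and there is a
`β > 0` such that every directed cycle (with at least one edge) repeating no vertex other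
than its endpoint has weight at least `β` times its number of edges.  Then any two
admissible functions vanishing at `f₀` are joined by a sequence of admissible functions,
consecutive ones differing at exactly one vertex, of length at most
`(Σ_v |τ₁ v - τ₂ v|)/β + |V|`. -/
theorem admissible_connected_by_single_site_moves
    {V : Type*} [Fintype V] (E : V → V → Prop) (δ : V → V → ℝ)
    (hsymm : ∀ v w, E v w ↔ E w v)
    (hconn : ∀ v w : V, ∃ l : List V, IsWalk E v w l)
    (β : ℝ) (hβ : 0 < β)
    (hcyc : ∀ (a : V) (l : List V), IsWalk E a a l → 2 ≤ l.length → l.dropLast.Nodup →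
      β * ((l.length : ℝ) - 1) ≤ walkWeight δ l)
    (f₀ : V) (τ₁ τ₂ : V → ℝ)
    (h₁ : (∀ v w, E v w → τ₁ w - τ₁ v ≤ δ v w) ∧ τ₁ f₀ = 0)
    (h₂ : (∀ v w, E v w → τ₂ w - τ₂ v ≤ δ v w) ∧ τ₂ f₀ = 0) :
    ∃ (N : ℕ) (σ : ℕ → V → ℝ),
      (N : ℝ) ≤ (∑ v : V, |τ₁ v - τ₂ v|) / β + Fintype.card V ∧
      σ 0 = τ₁ ∧ σ N = τ₂ ∧
      (∀ j ≤ N, ∀ v w, E v w → σ j w - σ j v ≤ δ v w) ∧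
      (∀ j < N, ∃ v, σ (j + 1) v ≠ σ j v ∧ ∀ w, w ≠ v → σ (j + 1) w = σ j w) :=
  admissible_connected_by_single_site_moves_general E δ β hβ hcyc f₀ τ₁ τ₂ h₁ h₂
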